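/- arXiv:2112.14529 — 4 statements merged into one kernel-verified Lean document; each statement's English description precedes it below -/
import Mathlib

section
/- Define K_M(x) := 15(M+1) / (M(4 + 6M + 4M² + M³)) · |F_M′(x)|². Then {K_M}_{M=1}^{∞} is a family of good kernels on [−π, π]: (i) K_M(x) ≥ 0 for all x; (ii) (1/(2π)) ∫_{-π}^{π} K_M(x) dx = 1 for every M ≥ 1; (iii) for every δ ∈ (0, π), lim_{M→∞} ∫_{δ ≤ |x| ≤ π} K_M(x) dx = 0. -/
open Real Filter MeasureTheory intervalIntegral Finset
open scoped Topology BigOperators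

/-- The Fejér kernel of order `M`. -/
noncomputable def fejer (M : ℕ) (x : ℝ) : ℝ :=
  ∑ k ∈ Finset.Icc (-(M : ℤ)) (M : ℤ), (1 - |(k : ℝ)| / ((M : ℝ) + 1)) * Real.cos (k * x)

lemma sin_sq_sub_sin_sq (a b : ℝ) :
    Real.sin a ^ 2 - Real.sin b ^ 2 = Real.sin (a+b) * Real.sin (a-b) := by
  rw [Real.sin_add, Real.sin_sub]
  nlinarith [Real.sin_sq_add_cos_sq a, Real.sin_sq_add_cos_sq b]

lemma Icc_succ (n : ℕ) : Finset.Icc (-((n:ℤ)+1)) ((n:ℤ)+1)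
    = insert (-((n:ℤ)+1)) (insert ((n:ℤ)+1) (Finset.Icc (-(n:ℤ)) (n:ℤ))) := by
  ext a; simp only [Finset.mem_Icc, Finset.mem_insert]; omega

lemma dirichlet_id (n : ℕ) (x : ℝ) :
    (∑ k ∈ Finset.Icc (-(n:ℤ)) (n:ℤ), Real.cos (k * x)) * Real.sin (x/2)
      = Real.sin (((n:ℝ) + 1/2) * x) := by
  induction n with
  | zero => simp; ring_nf
  | succ n ih =>
    have h1 : ((n:ℤ)+1) ∉ Finset.Icc (-(n:ℤ)) (n:ℤ) := by simp
    have h2 : (-((n:ℤ)+1)) ∉ insert ((n:ℤ)+1) (Finset.Icc (-(n:ℤ)) (n:ℤ)) := by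
      simp; omega
    push_cast
    rw [Icc_succ, Finset.sum_insert h2, Finset.sum_insert h1]
    push_cast
    have e1 : (((n:ℝ)+1) + 1/2) * x = (((n:ℝ)+1)*x) + x/2 := by ring
    have e2 : ((n:ℝ) + 1/2) * x = (((n:ℝ)+1)*x) - x/2 := by ring
    have e3 : (-((n:ℝ)+1)) * x = -(((n:ℝ)+1)*x) := by ring
    rw [e1, Real.sin_add, e3, Real.cos_neg]
    rw [e2, Real.sin_sub] at ih
    nlinarith [ih]

lemma fejer_rec (n : ℕ) (x : ℝ) :
    ((n:ℝ)+2) * fejer (n+1) x = ((n:ℝ)+1) * fejer n x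
      + ∑ k ∈ Finset.Icc (-((n:ℤ)+1)) ((n:ℤ)+1), Real.cos (k * x) := by
  have hsub : Finset.Icc (-(n:ℤ)) (n:ℤ) ⊆ Finset.Icc (-((n:ℤ)+1)) ((n:ℤ)+1) := by
    intro a; simp only [Finset.mem_Icc]; omega
  have hext : ((n:ℝ)+1) * fejer n x
      = ∑ k ∈ Finset.Icc (-((n:ℤ)+1)) ((n:ℤ)+1),
          ((n:ℝ)+1) * ((1 - |(k : ℝ)| / ((n : ℝ) + 1)) * Real.cos (k * x)) := by
    rw [fejer, Finset.mul_sum]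
    refine Finset.sum_subset hsub fun k hk hk' => ?_
    have habs : |(k:ℝ)| = (n:ℝ)+1 := by
      simp only [Finset.mem_Icc, not_and, not_le] at hk hk'
      have hk2 : k = (n:ℤ)+1 ∨ k = -((n:ℤ)+1) := by omega
      rcases hk2 with h | h <;> rw [h] <;> push_cast
      · rw [abs_of_nonneg (by positivity)]
      · rw [abs_of_nonpos (by linarith [Nat.cast_nonneg (α := ℝ) n])]; ring
    rw [habs]
    have hne : (n:ℝ)+1 ≠ 0 := by positivity
    field_simp
    simp
  have hfe : fejer (n+1) x = ∑ k ∈ Finset.Icc (-((n:ℤ)+1)) ((n:ℤ)+1),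
      (1 - |(k : ℝ)| / ((n : ℝ) + 1 + 1)) * Real.cos (k * x) := by
    rw [fejer]; push_cast; rfl
  rw [hfe, hext, Finset.mul_sum, ← Finset.sum_add_distrib]
  refine Finset.sum_congr rfl ?_
  intro k hk
  have h1 : (n:ℝ)+1 ≠ 0 := by positivity
  have h2 : (n:ℝ)+1+1 ≠ 0 := by positivity
  field_simp
  ring

lemma fejer_id (n : ℕ) (x : ℝ) :
    ((n:ℝ)+1) * fejer n x * Real.sin (x/2)^2 = Real.sin (((n:ℝ)+1) * x / 2)^2 := by
  induction n with
  | zero => simp [fejer]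
  | succ n ih =>
    have hrec := fejer_rec n x
    have hdir := dirichlet_id (n+1) x
    push_cast at hdir ⊢
    have key : Real.sin (((n:ℝ)+1+1) * x / 2)^2 - Real.sin (((n:ℝ)+1) * x / 2)^2
        = Real.sin (((n:ℝ)+1+1/2) * x) * Real.sin (x/2) := by
      have := sin_sq_sub_sin_sq (((n:ℝ)+1+1)*x/2) (((n:ℝ)+1)*x/2)
      have e1 : ((n:ℝ)+1+1)*x/2 + ((n:ℝ)+1)*x/2 = ((n:ℝ)+1+1/2)*x := by ring
      have e2 : ((n:ℝ)+1+1)*x/2 - ((n:ℝ)+1)*x/2 = x/2 := by ring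
      rw [e1, e2] at this; exact this
    have hd2 : (∑ k ∈ Finset.Icc (-((n:ℤ)+1)) ((n:ℤ)+1), Real.cos (k * x))
        * Real.sin (x/2)^2 = Real.sin (((n:ℝ)+1+1/2) * x) * Real.sin (x/2) := by
      rw [sq, ← mul_assoc, hdir]
    nlinarith [hrec, hd2, ih, key]

lemma fejer_hasDeriv (M : ℕ) (x : ℝ) :
    HasDerivAt (fejer M) (∑ k ∈ Finset.Icc (-(M:ℤ)) (M:ℤ),
      (1 - |(k : ℝ)| / ((M : ℝ) + 1)) * (-Real.sin ((k:ℝ)*x) * ((k:ℝ)*1))) x := by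
  apply HasDerivAt.fun_sum
  intro k _
  exact (((Real.hasDerivAt_cos ((k:ℝ)*x)).comp x
    ((hasDerivAt_id x).const_mul (k:ℝ))).const_mul _)

lemma fejer_deriv (M : ℕ) (x : ℝ) :
    deriv (fejer M) x = ∑ k ∈ Finset.Icc (-(M:ℤ)) (M:ℤ),
      (-((1 - |(k : ℝ)| / ((M : ℝ) + 1)) * (k:ℝ))) * Real.sin ((k:ℝ)*x) := by
  rw [(fejer_hasDeriv M x).deriv]
  exact Finset.sum_congr rfl fun k _ => by ring

lemma integral_cos_int (n : ℤ) :
    ∫ x in (-π)..π, Real.cos ((n:ℝ) * x) = if n = 0 then 2*π else 0 := by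
  rcases eq_or_ne n 0 with h | h
  · simp [h, two_mul]
  · have hn : (n:ℝ) ≠ 0 := Int.cast_ne_zero.mpr h
    rw [intervalIntegral.integral_comp_mul_left _ hn, integral_cos]
    have h1 : Real.sin ((n:ℝ) * π) = 0 := Real.sin_int_mul_pi n
    have h2 : Real.sin ((n:ℝ) * (-π)) = 0 := by
      rw [mul_neg, Real.sin_neg, h1, neg_zero]
    simp [h1, h2, h]

lemma integral_sin_mul_sin_int (j k : ℤ) :
    ∫ x in (-π)..π, Real.sin ((j:ℝ)*x) * Real.sin ((k:ℝ)*x)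
      = (if j = k then π else 0) - (if j = -k then π else 0) := by
  have hpt : ∀ x : ℝ, Real.sin ((j:ℝ)*x) * Real.sin ((k:ℝ)*x)
      = (Real.cos (((j-k : ℤ):ℝ) * x) - Real.cos (((j+k : ℤ):ℝ) * x))/2 := by
    intro x
    push_cast
    rw [show ((j:ℝ)-k)*x = (j:ℝ)*x - (k:ℝ)*x by ring,
        show ((j:ℝ)+k)*x = (j:ℝ)*x + (k:ℝ)*x by ring,
        Real.cos_sub, Real.cos_add]
    ring
  rw [intervalIntegral.integral_congr (fun x _ => hpt x)]
  have i1 : IntervalIntegrable (fun x => Real.cos (((j-k : ℤ):ℝ) * x)) volume (-π) π :=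
    (Real.continuous_cos.comp (continuous_const.mul continuous_id)).intervalIntegrable _ _
  have i2 : IntervalIntegrable (fun x => Real.cos (((j+k : ℤ):ℝ) * x)) volume (-π) π :=
    (Real.continuous_cos.comp (continuous_const.mul continuous_id)).intervalIntegrable _ _
  rw [intervalIntegral.integral_div, intervalIntegral.integral_sub i1 i2,
      integral_cos_int, integral_cos_int]
  by_cases h1 : j = k <;> by_cases h2 : j = -k
  · have d0 : k = 0 := by omega
    subst h1; subst d0; norm_num
  · have d1 : j - k = 0 := by omega
    have d2 : j + k ≠ 0 := by omega
    simp only [d1, if_pos rfl, if_neg d2, if_pos h1, if_neg h2, if_true, eq_self_iff_true]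
    ring
  · have d1 : j - k ≠ 0 := by omega
    have d2 : j + k = 0 := by omega
    simp only [d2, if_pos rfl, if_neg d1, if_neg h1, if_pos h2, if_true, eq_self_iff_true]
    ring
  · have d1 : j - k ≠ 0 := by omega
    have d2 : j + k ≠ 0 := by omega
    simp only [if_neg d1, if_neg d2, if_neg h1, if_neg h2]
    ring

lemma psum2 (n : ℕ) : ∑ j ∈ Finset.range (n+1), (j:ℝ)^2
    = (n:ℝ)*((n:ℝ)+1)*(2*(n:ℝ)+1)/6 := by
  induction n with
  | zero => simp
  | succ n ih => rw [Finset.sum_range_succ, ih]; push_cast; ring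

lemma psum3 (n : ℕ) : ∑ j ∈ Finset.range (n+1), (j:ℝ)^3
    = ((n:ℝ)*((n:ℝ)+1)/2)^2 := by
  induction n with
  | zero => simp
  | succ n ih => rw [Finset.sum_range_succ, ih]; push_cast; ring

lemma psum4 (n : ℕ) : ∑ j ∈ Finset.range (n+1), (j:ℝ)^4
    = (n:ℝ)*((n:ℝ)+1)*(2*(n:ℝ)+1)*(3*(n:ℝ)^2+3*(n:ℝ)-1)/30 := by
  induction n with
  | zero => simp
  | succ n ih => rw [Finset.sum_range_succ, ih]; push_cast; ring

lemma key_sum (n : ℕ) : ∑ j ∈ Finset.range (n+1), ((j:ℝ) * ((n:ℝ)+1-(j:ℝ)))^2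
    = (n:ℝ)*((n:ℝ)+1)*((n:ℝ)+2)*((n:ℝ)^2+2*(n:ℝ)+2)/30 := by
  have h : ∀ j ∈ Finset.range (n+1), ((j:ℝ) * ((n:ℝ)+1-(j:ℝ)))^2
      = ((n:ℝ)+1)^2 * (j:ℝ)^2 - 2*((n:ℝ)+1)*(j:ℝ)^3 + (j:ℝ)^4 := fun j _ => by ring
  rw [Finset.sum_congr rfl h]
  rw [Finset.sum_add_distrib, Finset.sum_sub_distrib, ← Finset.mul_sum, ← Finset.mul_sum,
      psum2, psum3, psum4]
  ring

lemma sum_Icc_neg (g : ℤ → ℝ) (n : ℕ) :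
    ∑ k ∈ Finset.Icc (-(n:ℤ)) (n:ℤ), g k
      = g 0 + ∑ j ∈ Finset.range n, (g ((j:ℤ)+1) + g (-((j:ℤ)+1))) := by
  induction n with
  | zero => simp
  | succ n ih =>
    have h1 : ((n:ℤ)+1) ∉ Finset.Icc (-(n:ℤ)) (n:ℤ) := by simp
    have h2 : (-((n:ℤ)+1)) ∉ insert ((n:ℤ)+1) (Finset.Icc (-(n:ℤ)) (n:ℤ)) := by
      simp; omega
    push_cast
    rw [Icc_succ, Finset.sum_insert h2, Finset.sum_insert h1, ih, Finset.sum_range_succ]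
    push_cast
    ring

lemma integral_sq_sum (n : ℕ) (b : ℤ → ℝ) :
    ∫ x in (-π)..π, (∑ k ∈ Finset.Icc (-(n:ℤ)) (n:ℤ), b k * Real.sin ((k:ℝ)*x))^2
      = ∑ j ∈ Finset.Icc (-(n:ℤ)) (n:ℤ), (b j^2 * π - b j * b (-j) * π) := by
  have hpt : ∀ x ∈ Set.uIcc (-π) π,
      (∑ k ∈ Finset.Icc (-(n:ℤ)) (n:ℤ), b k * Real.sin ((k:ℝ)*x))^2
      = ∑ j ∈ Finset.Icc (-(n:ℤ)) (n:ℤ), ∑ k ∈ Finset.Icc (-(n:ℤ)) (n:ℤ),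
          (b j * b k) * (Real.sin ((j:ℝ)*x) * Real.sin ((k:ℝ)*x)) := by
    intro x _
    rw [sq, Finset.sum_mul_sum]
    exact Finset.sum_congr rfl fun j _ => Finset.sum_congr rfl fun k _ => by ring
  rw [intervalIntegral.integral_congr hpt]
  have hcont : ∀ j k : ℤ, Continuous (fun x : ℝ =>
      (b j * b k) * (Real.sin ((j:ℝ)*x) * Real.sin ((k:ℝ)*x))) := by
    intro j k
    exact continuous_const.mul ((Real.continuous_sin.comp
      (continuous_const.mul continuous_id)).mul
      (Real.continuous_sin.comp (continuous_const.mul continuous_id)))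
  rw [intervalIntegral.integral_finset_sum (fun j _ =>
    (continuous_finset_sum _ fun k _ => hcont j k).intervalIntegrable _ _)]
  refine Finset.sum_congr rfl fun j hj => ?_
  rw [intervalIntegral.integral_finset_sum (fun k _ =>
    (hcont j k).intervalIntegrable _ _)]
  have hjk : ∀ k : ℤ, ∫ x in (-π)..π,
      (b j * b k) * (Real.sin ((j:ℝ)*x) * Real.sin ((k:ℝ)*x))
      = (b j * b k) * ((if j = k then π else 0) - (if j = -k then π else 0)) := by
    intro k
    rw [intervalIntegral.integral_const_mul, integral_sin_mul_sin_int]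
  rw [Finset.sum_congr rfl fun k _ => hjk k]
  have hsplit : ∀ k ∈ Finset.Icc (-(n:ℤ)) (n:ℤ),
      (b j * b k) * ((if j = k then π else 0) - (if j = -k then π else 0))
      = (if k = j then b j * b k * π else 0) - (if k = -j then b j * b k * π else 0) := by
    intro k _
    have e1 : (j = k) ↔ (k = j) := eq_comm
    have e2 : (j = -k) ↔ (k = -j) := by omega
    simp only [e1, e2]
    split_ifs <;> ring
  rw [Finset.sum_congr rfl hsplit, Finset.sum_sub_distrib,
      Finset.sum_ite_eq' _ j, Finset.sum_ite_eq' _ (-j)]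
  have hmj : -j ∈ Finset.Icc (-(n:ℤ)) (n:ℤ) := by
    simp only [Finset.mem_Icc] at hj ⊢; omega
  rw [if_pos hj, if_pos hmj]
  ring

lemma integral_deriv_sq (M : ℕ) :
    ∫ x in (-π)..π, (deriv (fejer M) x)^2
      = 4*π * ((M:ℝ)*((M:ℝ)+1)*((M:ℝ)+2)*((M:ℝ)^2+2*(M:ℝ)+2)/30) / ((M:ℝ)+1)^2 := by
  set b : ℤ → ℝ := fun k => -((1 - |(k:ℝ)|/((M:ℝ)+1)) * (k:ℝ)) with hbdef
  have h1 : ∫ x in (-π)..π, (deriv (fejer M) x)^2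
      = ∫ x in (-π)..π, (∑ k ∈ Finset.Icc (-(M:ℤ)) (M:ℤ), b k * Real.sin ((k:ℝ)*x))^2 :=
    intervalIntegral.integral_congr fun x _ => by rw [fejer_deriv]
  have hb : ∀ j : ℤ, b (-j) = - b j := by
    intro j
    simp only [hbdef, Int.cast_neg, abs_neg]
    ring
  have hb0 : b 0 = 0 := by simp [hbdef]
  rw [h1, integral_sq_sum M b]
  have h2 : ∀ j ∈ Finset.Icc (-(M:ℤ)) (M:ℤ),
      b j^2 * π - b j * b (-j) * π = 2*π*(b j)^2 := by
    intro j _; rw [hb]; ring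
  rw [Finset.sum_congr rfl h2, sum_Icc_neg (fun k => 2*π*(b k)^2) M]
  have h3 : ∀ j ∈ Finset.range M,
      2*π*(b ((j:ℤ)+1))^2 + 2*π*(b (-((j:ℤ)+1)))^2
      = 4*π/((M:ℝ)+1)^2 * (((j:ℝ)+1) * ((M:ℝ)+1-((j:ℝ)+1)))^2 := by
    intro j _
    rw [hb]
    have habs : |(((j:ℤ)+1 : ℤ):ℝ)| = (j:ℝ)+1 := by
      push_cast; rw [abs_of_nonneg (by positivity)]
    have hbj : b ((j:ℤ)+1) = -((1 - ((j:ℝ)+1)/((M:ℝ)+1)) * ((j:ℝ)+1)) := by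
      simp only [hbdef, habs]; push_cast; ring
    rw [hbj]
    have hM : (M:ℝ)+1 ≠ 0 := by positivity
    field_simp
    ring
  rw [Finset.sum_congr rfl h3, ← Finset.mul_sum]
  have h4 := key_sum M
  rw [Finset.sum_range_succ'] at h4
  push_cast at h4
  simp only [hb0]
  have h5 : ∑ i ∈ Finset.range M, (((i:ℝ)+1) * ((M:ℝ)+1-((i:ℝ)+1)))^2
      = (M:ℝ)*((M:ℝ)+1)*((M:ℝ)+2)*((M:ℝ)^2+2*(M:ℝ)+2)/30 := by
    rw [← h4]; norm_num
  rw [h5]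
  ring

lemma bound_arith {m t σ N : ℝ} (hm : 1 ≤ m) (hσ : 0 < σ) (hσ1 : σ ≤ 1)
    (ht : σ ≤ t) (ht1 : t ≤ 1) (hN : |N| ≤ m^2*t^2 + m*t) :
    |N| * σ^3 ≤ 2 * (m^2 * t^4) := by
  have htpos : 0 < t := lt_of_lt_of_le hσ ht
  have b1 : σ^2 ≤ t^2 := by nlinarith
  have b2 : σ^3 ≤ σ^2 := by nlinarith
  have k1 : σ^3 ≤ t^2 := le_trans b2 b1
  have k2 : σ^3 ≤ t^3 := pow_le_pow_left₀ hσ.le ht 3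
  have A1 : m^2*t^2*σ^3 ≤ m^2*t^2*t^2 := mul_le_mul_of_nonneg_left k1 (by positivity)
  have A2 : m*t*σ^3 ≤ m*t*t^3 := mul_le_mul_of_nonneg_left k2 (by positivity)
  have A3 : m*t*t^3 ≤ m^2*t^4 := by
    have h1 : m ≤ m^2 := by nlinarith
    have h2 := mul_le_mul_of_nonneg_right h1 (pow_nonneg htpos.le 4)
    nlinarith [h2]
  have A4 : |N| * σ^3 ≤ (m^2*t^2 + m*t)*σ^3 :=
    mul_le_mul_of_nonneg_right hN (by positivity)
  nlinarith [A1, A2, A3, A4]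

lemma deriv_fejer_bound (M : ℕ) {x σ : ℝ} (hσ : 0 < σ) (hσ1 : σ ≤ 1)
    (hs : σ ≤ |Real.sin (x/2)|) :
    |deriv (fejer M) x| ≤ 2/σ^3 := by
  set m : ℝ := (M:ℝ)+1 with hmdef
  have hm : 1 ≤ m := by simp only [hmdef]; have := Nat.cast_nonneg (α := ℝ) M; linarith
  have hm0 : m ≠ 0 := by positivity
  have hs0 : Real.sin (x/2) ≠ 0 := by
    intro h; rw [h] at hs; simp at hs; linarith
  have h1 : HasDerivAt (fun y : ℝ => m*y/2) (m*1/2) x :=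
    ((hasDerivAt_id x).const_mul m).div_const 2
  have hu : HasDerivAt (fun y : ℝ => Real.sin (m*y/2)^2)
      ((2:ℕ) * Real.sin (m*x/2)^1 * (Real.cos (m*x/2) * (m*1/2))) x :=
    ((Real.hasDerivAt_sin (m*x/2)).comp (h := fun y : ℝ => m*y/2) x h1).fun_pow 2
  have h2 : HasDerivAt (fun y : ℝ => y/2) ((1:ℝ)/2) x :=
    (hasDerivAt_id x).div_const 2
  have hv : HasDerivAt (fun y : ℝ => m * Real.sin (y/2)^2)
      (m * ((2:ℕ) * Real.sin (x/2)^1 * (Real.cos (x/2) * ((1:ℝ)/2)))) x :=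
    (((Real.hasDerivAt_sin (x/2)).comp (h := fun y : ℝ => y/2) x h2).fun_pow 2).const_mul m
  have hvx : m * Real.sin (x/2)^2 ≠ 0 := mul_ne_zero hm0 (pow_ne_zero 2 hs0)
  have hq := hu.div hv hvx
  have hcont2 : Continuous fun y : ℝ => Real.sin (y/2) :=
    Real.continuous_sin.comp (continuous_id.div_const 2)
  have hopen : IsOpen {y : ℝ | Real.sin (y/2) ≠ 0} :=
    isOpen_compl_singleton.preimage hcont2
  have hev : (fun y => Real.sin (m*y/2)^2 / (m * Real.sin (y/2)^2)) =ᶠ[𝓝 x] fejer M := by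
    filter_upwards [hopen.mem_nhds hs0] with y hy
    have hA : m * fejer M y * Real.sin (y/2)^2 = Real.sin (m * y / 2)^2 := by
      have h := fejer_id M y
      rw [hmdef]
      convert h using 3
    have hy2 : Real.sin (y/2)^2 ≠ 0 := pow_ne_zero 2 hy
    rw [div_eq_iff (mul_ne_zero hm0 hy2)]
    linarith [hA]
  have hd : deriv (fejer M) x
      = ((2:ℕ) * Real.sin (m*x/2)^1 * (Real.cos (m*x/2) * (m*1/2)) * (m * Real.sin (x/2)^2)
         - Real.sin (m*x/2)^2 * (m * ((2:ℕ) * Real.sin (x/2)^1 * (Real.cos (x/2) * ((1:ℝ)/2)))))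
        / (m * Real.sin (x/2)^2)^2 := by
    rw [← hev.deriv_eq]
    exact hq.deriv
  set s : ℝ := Real.sin (x/2)
  set c : ℝ := Real.cos (x/2)
  set S : ℝ := Real.sin (m*x/2)
  set C : ℝ := Real.cos (m*x/2)
  set t : ℝ := |s| with htdef
  have ht : σ ≤ t := hs
  have ht1 : t ≤ 1 := Real.abs_sin_le_one _
  have htpos : 0 < t := lt_of_lt_of_le hσ ht
  have hts : s^2 = t^2 := (sq_abs s).symm
  have hS1 : |S| ≤ 1 := Real.abs_sin_le_one _
  have hC1 : |C| ≤ 1 := Real.abs_cos_le_one _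
  have hc1 : |c| ≤ 1 := Real.abs_cos_le_one _
  rw [hd, abs_div]
  have hden : |(m * s^2)^2| = m^2 * t^4 := by
    rw [abs_of_nonneg (by positivity)]
    rw [hts]; ring
  rw [hden, div_le_div_iff₀ (by positivity) (by positivity)]
  set N : ℝ := (2:ℕ) * S^1 * (C * (m*1/2)) * (m * s^2)
      - S^2 * (m * ((2:ℕ) * s^1 * (c * ((1:ℝ)/2)))) with hNdef
  have hnum : |N| ≤ m^2*t^2 + m*t := by
    have e1 : |(2:ℕ) * S^1 * (C * (m*1/2)) * (m * s^2)| ≤ m^2*t^2 := by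
      have heq : |(2:ℕ) * S^1 * (C * (m*1/2)) * (m * s^2)| = |S| * |C| * (m^2*t^2) := by
        rw [show ((2:ℕ):ℝ) * S^1 * (C * (m*1/2)) * (m * s^2) = (S*C)*(m^2*s^2) by push_cast; ring]
        rw [abs_mul, abs_mul, abs_of_nonneg (by positivity : (0:ℝ) ≤ m^2*s^2), hts]
      rw [heq]
      have h01 : |S| * |C| ≤ 1 := mul_le_one₀ hS1 (abs_nonneg C) hC1
      have h02 := mul_le_mul_of_nonneg_right h01 (by positivity : (0:ℝ) ≤ m^2*t^2)
      linarith
    have e2 : |S^2 * (m * ((2:ℕ) * s^1 * (c * ((1:ℝ)/2))))| ≤ m*t := by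
      have heq : |S^2 * (m * ((2:ℕ) * s^1 * (c * ((1:ℝ)/2))))| = S^2 * (m*t) * |c| := by
        rw [show S^2 * (m * (((2:ℕ):ℝ) * s^1 * (c * ((1:ℝ)/2)))) = (S^2*(m*s))*c by push_cast; ring]
        rw [abs_mul, abs_mul, abs_mul, abs_of_nonneg (sq_nonneg S),
            abs_of_nonneg (by positivity : (0:ℝ) ≤ m)]
      rw [heq]
      have hSS : S^2 ≤ 1 := by nlinarith [sq_abs S, abs_nonneg S]
      have h01 : S^2 * |c| ≤ 1 := mul_le_one₀ hSS (abs_nonneg c) hc1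
      have h02 := mul_le_mul_of_nonneg_right h01 (by positivity : (0:ℝ) ≤ m*t)
      have h03 : S^2 * (m*t) * |c| = S^2 * |c| * (m*t) := by ring
      linarith [h02, h03.le, h03.ge]
    calc |N| ≤ |(2:ℕ) * S^1 * (C * (m*1/2)) * (m * s^2)|
          + |S^2 * (m * ((2:ℕ) * s^1 * (c * ((1:ℝ)/2))))| := abs_sub _ _
      _ ≤ m^2*t^2 + m*t := add_le_add e1 e2
  exact bound_arith hm hσ hσ1 ht ht1 hnum

/-- `K_M(x) := 15(M+1) / (M(4 + 6M + 4M² + M³)) · |F_M′(x)|²`. -/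
noncomputable def Kker (M : ℕ) (x : ℝ) : ℝ :=
  15 * ((M : ℝ) + 1) / ((M : ℝ) * (4 + 6 * M + 4 * (M : ℝ) ^ 2 + (M : ℝ) ^ 3))
    * |deriv (fejer M) x| ^ 2

/-- `{K_M}` is a family of good kernels on `[−π, π]`. -/
theorem Kker_good_kernels :
    (∀ M : ℕ, 0 < M → ∀ x : ℝ, 0 ≤ Kker M x) ∧
    (∀ M : ℕ, 0 < M → (1 / (2 * π)) * ∫ x in (-π)..π, Kker M x = 1) ∧
    (∀ δ : ℝ, 0 < δ → δ < π →
      Tendsto (fun M : ℕ => ∫ x in {x : ℝ | δ ≤ |x| ∧ |x| ≤ π}, Kker M x)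
        atTop (𝓝 0)) := by
  have coeff_nonneg : ∀ M : ℕ,
      0 ≤ 15 * ((M : ℝ) + 1) / ((M : ℝ) * (4 + 6 * M + 4 * (M : ℝ) ^ 2 + (M : ℝ) ^ 3)) := by
    intro M; positivity
  refine ⟨?_, ?_, ?_⟩
  · intro M _ x
    exact mul_nonneg (coeff_nonneg M) (pow_nonneg (abs_nonneg _) 2)
  · intro M hM
    have hM1 : (1:ℝ) ≤ (M:ℝ) := by exact_mod_cast hM
    have hpi := Real.pi_pos
    simp only [Kker, sq_abs]
    rw [intervalIntegral.integral_const_mul, integral_deriv_sq]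
    have h1 : (M:ℝ) ≠ 0 := by linarith
    have h2 : (4 + 6 * (M:ℝ) + 4 * (M:ℝ)^2 + (M:ℝ)^3) ≠ 0 := by positivity
    have h3 : ((M:ℝ)+1) ≠ 0 := by positivity
    have h4 : π ≠ 0 := ne_of_gt hpi
    field_simp
    ring
  · intro δ hδ hδπ
    have hpi := Real.pi_pos
    set σ : ℝ := Real.sin (δ/2) with hσdef
    have hσpos : 0 < σ := Real.sin_pos_of_pos_of_lt_pi (by linarith) (by linarith)
    have hσ1 : σ ≤ 1 := Real.sin_le_one _
    set B : ℝ := 2/σ^3 with hBdef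
    have hB : 0 ≤ B := by positivity
    set S : Set ℝ := {x : ℝ | δ ≤ |x| ∧ |x| ≤ π} with hSdef
    have hSm : MeasurableSet S := by
      have : S = (fun x : ℝ => |x|) ⁻¹' (Set.Icc δ π) := by
        ext x; simp [hSdef, Set.mem_Icc]
      rw [this]
      exact (continuous_abs.measurable) measurableSet_Icc
    have hSsub : S ⊆ Set.Icc (-π) π := by
      intro x hx
      have := hx.2
      exact Set.mem_Icc.mpr (abs_le.mp this)
    have hSfin : volume S < ⊤ := by
      refine lt_of_le_of_lt (measure_mono hSsub) ?_
      rw [Real.volume_Icc]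
      exact ENNReal.ofReal_lt_top
    have htoReal : (volume S).toReal ≤ 2*π := by
      have hle := measure_mono (μ := volume) hSsub
      rw [Real.volume_Icc] at hle
      have h2 : π - -π = 2*π := by ring
      rw [h2] at hle
      exact ENNReal.toReal_le_of_le_ofReal (by positivity) hle
    -- bound on the derivative on S
    have hder : ∀ M : ℕ, ∀ x ∈ S, |deriv (fejer M) x| ≤ B := by
      intro M x hx
      obtain ⟨hx1, hx2⟩ := hx
      apply deriv_fejer_bound M hσpos hσ1
      have habs : |Real.sin (x/2)| = Real.sin (|x|/2) := by
        rcases abs_cases x with ⟨h1, h2⟩ | ⟨h1, h2⟩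
        · rw [h1, abs_of_nonneg (Real.sin_nonneg_of_nonneg_of_le_pi (by linarith)
            (by linarith))]
        · rw [h1]
          have hx0 : x ≤ 0 := by linarith
          have : Real.sin (-x/2) = -Real.sin (x/2) := by
            rw [neg_div, Real.sin_neg]
          rw [this, abs_of_nonpos]
          have : -x ≤ π := by rw [h1] at hx2; exact hx2
          have hsn : 0 ≤ Real.sin (-(x/2)) :=
            Real.sin_nonneg_of_nonneg_of_le_pi (by linarith) (by linarith)
          rw [Real.sin_neg] at hsn
          linarith
      rw [habs]
      have hmem1 : δ/2 ∈ Set.Icc (-(π/2)) (π/2) :=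
        Set.mem_Icc.mpr ⟨by linarith, by linarith⟩
      have hmem2 : |x|/2 ∈ Set.Icc (-(π/2)) (π/2) :=
        Set.mem_Icc.mpr ⟨by linarith [abs_nonneg x], by linarith⟩
      exact Real.strictMonoOn_sin.monotoneOn hmem1 hmem2 (by linarith)
    have key : ∀ M : ℕ, ‖∫ x in S, Kker M x‖
        ≤ (15 * ((M : ℝ) + 1) / ((M : ℝ) * (4 + 6 * M + 4 * (M : ℝ) ^ 2 + (M : ℝ) ^ 3)) * B^2)
          * (volume S).toReal := by
      intro M
      apply norm_setIntegral_le_of_norm_le_const hSfin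
      intro x hx
      rw [Real.norm_eq_abs, Kker, abs_of_nonneg
        (mul_nonneg (coeff_nonneg M) (pow_nonneg (abs_nonneg _) 2))]
      refine mul_le_mul_of_nonneg_left ?_ (coeff_nonneg M)
      nlinarith [hder M x hx, abs_nonneg (deriv (fejer M) x), hB]
    apply squeeze_zero_norm' (a := fun M : ℕ => 30 * B^2 * (2*π) / (M:ℝ)^3)
    · filter_upwards [eventually_ge_atTop 1] with M hM1
      have hm1 : (1:ℝ) ≤ (M:ℝ) := by exact_mod_cast hM1
      have hcoeff : 15 * ((M : ℝ) + 1) / ((M : ℝ) * (4 + 6 * M + 4 * (M : ℝ) ^ 2 + (M : ℝ) ^ 3))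
          ≤ 30 / (M:ℝ)^3 := by
        rw [div_le_div_iff₀ (by positivity) (by positivity)]
        nlinarith [hm1, sq_nonneg ((M:ℝ))]
      refine le_trans (key M) ?_
      have step1 : (15 * ((M : ℝ) + 1) / ((M : ℝ) * (4 + 6 * M + 4 * (M : ℝ) ^ 2 + (M : ℝ) ^ 3)) * B^2)
          * (volume S).toReal
          ≤ (15 * ((M : ℝ) + 1) / ((M : ℝ) * (4 + 6 * M + 4 * (M : ℝ) ^ 2 + (M : ℝ) ^ 3)) * B^2)
          * (2*π) :=
        mul_le_mul_of_nonneg_left htoReal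
          (mul_nonneg (coeff_nonneg M) (sq_nonneg B))
      have step2 : (15 * ((M : ℝ) + 1) / ((M : ℝ) * (4 + 6 * M + 4 * (M : ℝ) ^ 2 + (M : ℝ) ^ 3)) * B^2)
          * (2*π) ≤ (30 / (M:ℝ)^3 * B^2) * (2*π) := by
        apply mul_le_mul_of_nonneg_right _ (by positivity)
        exact mul_le_mul_of_nonneg_right hcoeff (sq_nonneg B)
      have heq : (30 / (M:ℝ)^3 * B^2) * (2*π) = 30 * B^2 * (2*π) / (M:ℝ)^3 := by ring
      linarith [step1, step2, heq.le]
    · have htop : Tendsto (fun M : ℕ => ((M:ℝ))^3) atTop atTop :=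
        (tendsto_pow_atTop (by norm_num : (3:ℕ) ≠ 0)).comp tendsto_natCast_atTop_atTop
      exact Tendsto.div_atTop tendsto_const_nhds htop
end

section
/- Let a > 0 and let (M_n) be a sequence of positive integers with M_n²/n → a as n → ∞. Then the Riemann sums of the squared Fejér kernel over the regular n-point grid satisfy lim_{n→∞} (1/M_n) · (2π/n) ∑_{j=0}^{n−1} F_{M_n}(2πj/n)² = (4/3)π. -/
open Real Filter MeasureTheory intervalIntegral Finset
open scoped Topology BigOperators

lemma sum_cos_orth (n : ℕ) (hn : 0 < n) (m : ℤ) :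
    ∑ j ∈ Finset.range n, Real.cos (m * (2 * π * j / n)) =
      if (n : ℤ) ∣ m then (n : ℝ) else 0 := by
  by_cases h : (n : ℤ) ∣ m
  · rw [if_pos h]
    obtain ⟨t, rfl⟩ := h
    have : ∀ j ∈ Finset.range n, Real.cos (((n : ℤ) * t : ℤ) * (2 * π * j / n)) = 1 := by
      intro j _
      have hne : (n : ℝ) ≠ 0 := Nat.cast_ne_zero.mpr hn.ne'
      have : (((n : ℤ) * t : ℤ) : ℝ) * (2 * π * j / n) = ((t * j : ℤ) : ℝ) * (2 * π) := by
        push_cast; field_simp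
      rw [this, Real.cos_int_mul_two_pi]
    rw [Finset.sum_congr rfl this]
    simp
  · rw [if_neg h]
    set θ : ℝ := 2 * π * m / n with hθ
    have hterm : ∀ j : ℕ, Real.cos (m * (2 * π * j / n)) =
        (Complex.exp (θ * Complex.I) ^ j).re := by
      intro j
      rw [← Complex.exp_nat_mul]
      have : (j : ℂ) * ((θ : ℂ) * Complex.I) = ((j * θ : ℝ) : ℂ) * Complex.I := by
        push_cast; ring
      rw [this, Complex.exp_ofReal_mul_I_re]
      congr 1
      rw [hθ]
      have hne : (n : ℝ) ≠ 0 := Nat.cast_ne_zero.mpr hn.ne'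
      field_simp
    have hz1 : Complex.exp (θ * Complex.I) ≠ 1 := by
      rw [Ne, Complex.exp_eq_one_iff]
      rintro ⟨k, hk⟩
      apply h
      have hI : (Complex.I : ℂ) ≠ 0 := Complex.I_ne_zero
      have hne : (n : ℝ) ≠ 0 := Nat.cast_ne_zero.mpr hn.ne'
      have : (θ : ℂ) = (k : ℂ) * (2 * π) := by
        have := mul_right_cancel₀ hI (by linear_combination hk : (θ:ℂ) * Complex.I = ((k:ℂ) * (2*π)) * Complex.I)
        exact this
      have hre : θ = (k : ℝ) * (2 * π) := by
        exact_mod_cast this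
      rw [hθ] at hre
      have hπ : (0:ℝ) < π := Real.pi_pos
      have : (m : ℝ) = (k : ℝ) * n := by
        field_simp at hre
        nlinarith [Real.pi_pos]
      have hm : m = k * n := by exact_mod_cast this
      exact ⟨k, by linarith [hm]⟩
    have hzn : Complex.exp (θ * Complex.I) ^ n = 1 := by
      rw [← Complex.exp_nat_mul]
      have hne : (n : ℝ) ≠ 0 := Nat.cast_ne_zero.mpr hn.ne'
      have : (n : ℂ) * (θ * Complex.I) = (m : ℤ) * (2 * π * Complex.I) := by
        have hneC : (n : ℂ) ≠ 0 := Nat.cast_ne_zero.mpr hn.ne'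
        rw [hθ]; push_cast
        have hneC : (n : ℂ) ≠ 0 := Nat.cast_ne_zero.mpr hn.ne'
        field_simp
      rw [this, Complex.exp_int_mul_two_pi_mul_I]
    calc ∑ j ∈ Finset.range n, Real.cos (m * (2 * π * j / n))
        = (∑ j ∈ Finset.range n, Complex.exp (θ * Complex.I) ^ j).re := by
          rw [Complex.re_sum]; exact Finset.sum_congr rfl fun j _ => hterm j
      _ = 0 := by rw [geom_sum_eq hz1, hzn]; simp


lemma sum_Icc_neg_symm (M : ℕ) (f : ℤ → ℝ) (hf : ∀ k, f (-k) = f k) :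
    ∑ k ∈ Finset.Icc (-(M:ℤ)) M, f k = f 0 + 2 * ∑ j ∈ Finset.Icc (1:ℤ) M, f j := by
  induction M with
  | zero => simp
  | succ m ih =>
    have h1 : Finset.Icc (-(m+1:ℤ)) (m+1) =
        insert (-(m+1:ℤ)) (insert ((m+1:ℤ)) (Finset.Icc (-(m:ℤ)) m)) := by
      ext x; simp [Finset.mem_Icc]; omega
    have h2 : Finset.Icc (1:ℤ) (m+1) = insert ((m+1:ℤ)) (Finset.Icc (1:ℤ) m) := by
      ext x; simp [Finset.mem_Icc]; omega
    rw [show ((m+1:ℕ):ℤ) = (m:ℤ)+1 by push_cast; ring] at *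
    rw [h1, h2, Finset.sum_insert, Finset.sum_insert, Finset.sum_insert, ih]
    · rw [hf]; ring
    · simp [Finset.mem_Icc]
    · simp [Finset.mem_Icc]
    · simp [Finset.mem_Icc]; omega

lemma icc_insert (m : ℕ) : Finset.Icc (1:ℤ) ((m:ℤ)+1) = insert ((m:ℤ)+1) (Finset.Icc (1:ℤ) m) := by
  ext x; simp [Finset.mem_Icc]; omega

lemma sum_Icc_id (m : ℕ) : ∑ j ∈ Finset.Icc (1:ℤ) m, (j:ℝ) = m*(m+1)/2 := by
  induction m with
  | zero => simp
  | succ m ih =>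
    rw [show ((m+1:ℕ):ℤ) = (m:ℤ)+1 by push_cast; ring, icc_insert,
      Finset.sum_insert (by simp [Finset.mem_Icc]), ih]
    push_cast; ring

lemma sum_Icc_sq (m : ℕ) : ∑ j ∈ Finset.Icc (1:ℤ) m, (j:ℝ)^2 = m*(m+1)*(2*m+1)/6 := by
  induction m with
  | zero => simp
  | succ m ih =>
    rw [show ((m+1:ℕ):ℤ) = (m:ℤ)+1 by push_cast; ring, icc_insert,
      Finset.sum_insert (by simp [Finset.mem_Icc]), ih]
    push_cast; ring

lemma fejer_coeff_sq_sum (m : ℕ) :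
    ∑ k ∈ Finset.Icc (-(m:ℤ)) m, (1 - |(k : ℝ)| / ((m : ℝ) + 1))^2
      = 1 + (m:ℝ) * (2*(m:ℝ)+1) / (3*((m:ℝ)+1)) := by
  have hm1 : ((m:ℝ)+1) ≠ 0 := by positivity
  rw [sum_Icc_neg_symm m _ (by intro k; rw [Int.cast_neg, abs_neg])]
  have hmap : ∑ j ∈ Finset.Icc (1:ℤ) m, (1 - |(j : ℝ)| / ((m : ℝ) + 1))^2
      = ∑ j ∈ Finset.Icc (1:ℤ) m, (1 - 2*(j:ℝ)/((m:ℝ)+1) + (j:ℝ)^2/((m:ℝ)+1)^2) := by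
    apply Finset.sum_congr rfl
    intro j hj
    simp only [Finset.mem_Icc] at hj
    have : (0:ℝ) ≤ (j:ℝ) := by exact_mod_cast (by omega : (0:ℤ) ≤ j)
    rw [abs_of_nonneg this]
    field_simp; ring
  rw [hmap, Finset.sum_add_distrib, Finset.sum_sub_distrib, Finset.sum_const,
    Int.card_Icc]
  have : ∑ j ∈ Finset.Icc (1:ℤ) m, 2*(j:ℝ)/((m:ℝ)+1)
      = (2/((m:ℝ)+1)) * ∑ j ∈ Finset.Icc (1:ℤ) m, (j:ℝ) := by
    rw [Finset.mul_sum]; apply Finset.sum_congr rfl; intros; ring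
  rw [this, sum_Icc_id]
  have : ∑ j ∈ Finset.Icc (1:ℤ) m, (j:ℝ)^2/((m:ℝ)+1)^2
      = (1/((m:ℝ)+1)^2) * ∑ j ∈ Finset.Icc (1:ℤ) m, (j:ℝ)^2 := by
    rw [Finset.mul_sum]; apply Finset.sum_congr rfl; intros; ring
  rw [this, sum_Icc_sq]
  have hc : ((((m:ℤ) + 1 - 1).toNat : ℝ)) = (m:ℝ) := by
    norm_num
  simp only [nsmul_eq_mul]
  rw [show ((m:ℤ) + 1 - 1) = (m:ℤ) by ring]
  simp only [Int.toNat_natCast]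
  field_simp
  ring

lemma fejer_sq_sum (M n : ℕ) (hn : 0 < n) (h2M : 2 * M < n) :
    ∑ j ∈ Finset.range n, (fejer M (2 * π * j / n))^2
      = n * ∑ k ∈ Finset.Icc (-(M:ℤ)) M, (1 - |(k : ℝ)| / ((M : ℝ) + 1))^2 := by
  set c : ℤ → ℝ := fun k => 1 - |(k : ℝ)| / ((M : ℝ) + 1) with hc
  have hcsymm : ∀ k : ℤ, c (-k) = c k := by
    intro k; simp only [hc, Int.cast_neg, abs_neg]
  have hcoscos : ∀ x y : ℝ, Real.cos x * Real.cos y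
      = (Real.cos (x - y) + Real.cos (x + y)) / 2 := by
    intro x y; rw [Real.cos_sub, Real.cos_add]; ring
  have hsq : ∀ j : ℕ, (fejer M (2 * π * j / n))^2
      = ∑ k ∈ Finset.Icc (-(M:ℤ)) M, ∑ l ∈ Finset.Icc (-(M:ℤ)) M,
          (c k * c l) * (Real.cos (k * (2 * π * j / n)) * Real.cos (l * (2 * π * j / n))) := by
    intro j
    rw [sq, fejer, Finset.sum_mul_sum]
    apply Finset.sum_congr rfl; intro k _
    apply Finset.sum_congr rfl; intro l _
    ring
  rw [Finset.sum_congr rfl (fun j _ => hsq j), Finset.sum_comm]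
  have hswap : ∀ k, ∑ j ∈ Finset.range n, ∑ l ∈ Finset.Icc (-(M:ℤ)) M,
      (c k * c l) * (Real.cos (k * (2 * π * j / n)) * Real.cos (l * (2 * π * j / n)))
      = ∑ l ∈ Finset.Icc (-(M:ℤ)) M, ∑ j ∈ Finset.range n,
      (c k * c l) * (Real.cos (k * (2 * π * j / n)) * Real.cos (l * (2 * π * j / n))) :=
    fun k => Finset.sum_comm
  rw [Finset.sum_congr rfl (fun k _ => hswap k)]
  have hdvd : ∀ k ∈ Finset.Icc (-(M:ℤ)) M, ∀ l ∈ Finset.Icc (-(M:ℤ)) M, ∀ m : ℤ,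
      (m = k - l ∨ m = k + l) → ((n:ℤ) ∣ m ↔ m = 0) := by
    intro k hk l hl m hm
    simp only [Finset.mem_Icc] at hk hl
    constructor
    · intro hd
      refine Int.eq_zero_of_abs_lt_dvd hd ?_
      rcases hm with rfl | rfl <;> [skip; skip] <;>
        · rw [abs_lt]; constructor <;> [omega; omega]
    · rintro rfl; exact dvd_zero _
  have hinner : ∀ k ∈ Finset.Icc (-(M:ℤ)) M, ∀ l ∈ Finset.Icc (-(M:ℤ)) M,
      ∑ j ∈ Finset.range n,
        (c k * c l) * (Real.cos (k * (2 * π * j / n)) * Real.cos (l * (2 * π * j / n)))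
      = (if l = k then (n:ℝ) / 2 * (c k * c l) else 0)
        + (if l = -k then (n:ℝ) / 2 * (c k * c l) else 0) := by
    intro k hk l hl
    have hpt : ∀ j : ℕ, Real.cos (k * (2 * π * j / n)) * Real.cos (l * (2 * π * j / n))
        = (Real.cos (((k - l : ℤ) : ℝ) * (2 * π * j / n))
           + Real.cos (((k + l : ℤ) : ℝ) * (2 * π * j / n))) / 2 := by
      intro j
      rw [hcoscos]
      push_cast
      ring_nf
    simp only [hpt]
    rw [← Finset.mul_sum]
    have : ∑ j ∈ Finset.range n,
        (Real.cos (((k - l : ℤ) : ℝ) * (2 * π * j / n))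
           + Real.cos (((k + l : ℤ) : ℝ) * (2 * π * j / n))) / 2
        = ((∑ j ∈ Finset.range n, Real.cos (((k - l : ℤ) : ℝ) * (2 * π * j / n)))
          + ∑ j ∈ Finset.range n, Real.cos (((k + l : ℤ) : ℝ) * (2 * π * j / n))) / 2 := by
      rw [← Finset.sum_div, Finset.sum_add_distrib]
    rw [this, sum_cos_orth n hn (k - l), sum_cos_orth n hn (k + l)]
    have e1 : ((n:ℤ) ∣ (k - l)) = (l = k) := by
      rw [hdvd k hk l hl (k-l) (Or.inl rfl)]; exact propext (by omega)
    have e2 : ((n:ℤ) ∣ (k + l)) = (l = -k) := by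
      rw [hdvd k hk l hl (k+l) (Or.inr rfl)]; exact propext (by omega)
    rw [if_congr (iff_of_eq e1) rfl rfl, if_congr (iff_of_eq e2) rfl rfl]
    split_ifs <;> ring
  rw [Finset.sum_congr rfl (fun k hk => Finset.sum_congr rfl (fun l hl => hinner k hk l hl))]
  rw [Finset.mul_sum]
  apply Finset.sum_congr rfl
  intro k hk
  rw [Finset.sum_add_distrib, Finset.sum_ite_eq' _ k (fun l => (n:ℝ)/2 * (c k * c l)),
    Finset.sum_ite_eq' _ (-k) (fun l => (n:ℝ)/2 * (c k * c l))]
  have hmk : -k ∈ Finset.Icc (-(M:ℤ)) M := by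
    simp only [Finset.mem_Icc] at hk ⊢; omega
  rw [if_pos hk, if_pos hmk, hcsymm]
  ring

/-- If `M_n²/n → a > 0`, then the Riemann sums of the squared Fejér kernel satisfy
`lim_{n→∞} (1/M_n) (2π/n) ∑_{j=0}^{n−1} F_{M_n}(2πj/n)² = (4/3)π`. -/
theorem fejer_sq_riemann_sum_limit (a : ℝ) (ha : 0 < a) (M : ℕ → ℕ)
    (hMpos : ∀ n, 0 < M n)
    (hM : Tendsto (fun n : ℕ => ((M n : ℝ)) ^ 2 / (n : ℝ)) atTop (𝓝 a)) :
    Tendsto (fun n : ℕ =>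
        (1 / (M n : ℝ)) * ((2 * π / n) *
          ∑ j ∈ Finset.range n, (fejer (M n) (2 * π * j / n)) ^ 2))
      atTop (𝓝 ((4 / 3) * π)) := by
  -- M n → ∞
  have hMsq : Tendsto (fun n : ℕ => ((M n : ℝ))^2) atTop atTop := by
    have h1 : Tendsto (fun n : ℕ => ((M n : ℝ))^2 / n * n) atTop atTop :=
      Tendsto.pos_mul_atTop ha hM tendsto_natCast_atTop_atTop
    apply h1.congr'
    filter_upwards [eventually_gt_atTop 0] with n hn
    field_simp
  have hMtop : Tendsto (fun n : ℕ => (M n : ℝ)) atTop atTop := by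
    rw [tendsto_atTop_atTop]
    intro b
    have := (tendsto_atTop_atTop.mp hMsq) ((max b 0)^2)
    obtain ⟨N, hN⟩ := this
    refine ⟨N, fun n hn => ?_⟩
    have h2 := hN n hn
    have h0 : (0:ℝ) ≤ (M n : ℝ) := Nat.cast_nonneg _
    nlinarith [le_max_left b (0:ℝ), le_max_right b (0:ℝ)]
  have hMnat : Tendsto M atTop atTop := by
    rw [← tendsto_natCast_atTop_iff (R := ℝ)]; exact hMtop
  -- eventually 2 * M n < n
  have hev : ∀ᶠ n in atTop, 0 < n ∧ 2 * M n < n := by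
    have h1 : ∀ᶠ n in atTop, ((M n : ℝ))^2 / n < a + 1 :=
      hM.eventually (eventually_lt_nhds (by linarith))
    have h2 : ∀ᶠ n in atTop, 2 * (a + 1) < (M n : ℝ) :=
      hMtop.eventually (eventually_gt_atTop _)
    filter_upwards [h1, h2, eventually_gt_atTop 0] with n hn1 hn2 hn0
    refine ⟨hn0, ?_⟩
    have hnr : (0:ℝ) < n := by exact_mod_cast hn0
    have hsq : ((M n : ℝ))^2 < (a+1) * n := by
      rw [div_lt_iff₀ hnr] at hn1; exact hn1
    have hM0 : (0:ℝ) < (M n : ℝ) := by exact_mod_cast hMpos n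
    have : 2 * (a+1) * (M n : ℝ) < (a+1) * n := by nlinarith
    have : 2 * (M n : ℝ) < (n : ℝ) := by nlinarith
    exact_mod_cast this
  -- limit of the simplified expression
  have hg : Tendsto (fun m : ℕ =>
      2 * π * (1/(m:ℝ)) + (2 * π / 3) * (2 - 1/((m:ℝ)+1))) atTop (𝓝 ((4/3) * π)) := by
    have l1 : Tendsto (fun m : ℕ => (1:ℝ)/(m:ℝ)) atTop (𝓝 0) :=
      tendsto_one_div_atTop_nhds_zero_nat
    have l2 : Tendsto (fun m : ℕ => (1:ℝ)/((m:ℝ)+1)) atTop (𝓝 0) := by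
      have h : Tendsto (fun m : ℕ => ((m:ℝ)+1)) atTop atTop :=
        tendsto_atTop_add_const_right _ 1 tendsto_natCast_atTop_atTop
      simpa [one_div, Pi.inv_def] using h.inv_tendsto_atTop
    have := ((l1.const_mul (2*π)).add (((tendsto_const_nhds (x := (2:ℝ))).sub l2).const_mul (2*π/3)))
    convert this using 2 <;> ring
  have hgM : Tendsto (fun n : ℕ =>
      2 * π * (1/(M n:ℝ)) + (2 * π / 3) * (2 - 1/((M n:ℝ)+1))) atTop (𝓝 ((4/3) * π)) :=
    hg.comp hMnat
  apply hgM.congr'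
  filter_upwards [hev] with n hn
  obtain ⟨hn0, h2M⟩ := hn
  rw [fejer_sq_sum (M n) n hn0 h2M, fejer_coeff_sq_sum]
  have hnr : (n:ℝ) ≠ 0 := Nat.cast_ne_zero.mpr hn0.ne'
  have hmr : ((M n):ℝ) ≠ 0 := Nat.cast_ne_zero.mpr (hMpos n).ne'
  have hm1 : ((M n):ℝ) + 1 ≠ 0 := by positivity
  field_simp
  ring
end

section
/- Let a > 0 and let (M_n) be a sequence of positive integers with M_n²/n → a as n → ∞. Then lim_{n→∞} (1/M_n⁵) · (2π/n) ∑_{j=0}^{n−1} |F_{M_n}″(2πj/n)|² = (4/105)π. -/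
open Real Filter MeasureTheory intervalIntegral Finset
open scoped Topology BigOperators

lemma fejer_deriv2 (M : ℕ) (x : ℝ) :
    deriv (deriv (fejer M)) x =
      ∑ k ∈ Finset.Icc (-(M : ℤ)) (M : ℤ),
        -((1 - |(k : ℝ)| / ((M : ℝ) + 1)) * (k : ℝ) ^ 2 * Real.cos (k * x)) := by
  have hlin : ∀ (k : ℤ) (y : ℝ), HasDerivAt (fun y : ℝ => (k : ℝ) * y) (k : ℝ) y := by
    intro k y
    simpa using (hasDerivAt_id y).const_mul (k : ℝ)
  have h1 : deriv (fejer M) = fun y => ∑ k ∈ Finset.Icc (-(M : ℤ)) (M : ℤ),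
      (1 - |(k : ℝ)| / ((M : ℝ) + 1)) * (-Real.sin ((k : ℝ) * y) * (k : ℝ)) := by
    funext y
    apply HasDerivAt.deriv
    unfold fejer
    apply HasDerivAt.fun_sum
    intro k _
    exact ((hlin k y).cos).const_mul _
  rw [h1]
  apply HasDerivAt.deriv
  apply HasDerivAt.fun_sum
  intro k _
  have h2 : HasDerivAt (fun y => (1 - |(k : ℝ)| / ((M : ℝ) + 1)) *
      (-Real.sin ((k : ℝ) * y) * (k : ℝ)))
      ((1 - |(k : ℝ)| / ((M : ℝ) + 1)) * (-(Real.cos ((k : ℝ) * x) * (k : ℝ)) * (k : ℝ))) x :=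
    (((hlin k x).sin).neg.mul_const _).const_mul _
  exact h2.congr_deriv (by ring)

lemma sum_sq_orth (n Mn : ℕ) (hn : 0 < n) (h2M : 2 * Mn < n) (d : ℤ → ℝ)
    (hd : ∀ k, d (-k) = d k) :
    ∑ j ∈ Finset.range n,
        (∑ k ∈ Finset.Icc (-(Mn : ℤ)) (Mn : ℤ), d k * Real.cos (k * (2 * π * j / n))) ^ 2
      = n * ∑ k ∈ Finset.Icc (-(Mn : ℤ)) (Mn : ℤ), d k ^ 2 := by
  have key : ∀ k l : ℤ,
      ∑ j ∈ Finset.range n,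
          (d k * Real.cos (k * (2 * π * j / n))) * (d l * Real.cos (l * (2 * π * j / n)))
        = d k * d l / 2 * ((if (n : ℤ) ∣ (k - l) then (n : ℝ) else 0)
            + (if (n : ℤ) ∣ (k + l) then (n : ℝ) else 0)) := by
    intro k l
    have step : ∀ j : ℕ,
        (d k * Real.cos (k * (2 * π * j / n))) * (d l * Real.cos (l * (2 * π * j / n)))
          = d k * d l / 2 * (Real.cos (((k - l : ℤ) : ℝ) * (2 * π * j / n))
              + Real.cos (((k + l : ℤ) : ℝ) * (2 * π * j / n))) := by
      intro j
      have e1 : ((k - l : ℤ) : ℝ) * (2 * π * j / n)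
          = (k : ℝ) * (2 * π * j / n) - (l : ℝ) * (2 * π * j / n) := by push_cast; ring
      have e2 : ((k + l : ℤ) : ℝ) * (2 * π * j / n)
          = (k : ℝ) * (2 * π * j / n) + (l : ℝ) * (2 * π * j / n) := by push_cast; ring
      rw [e1, e2, Real.cos_sub, Real.cos_add]; ring
    simp_rw [step]
    rw [← Finset.mul_sum, Finset.sum_add_distrib, sum_cos_orth n hn (k - l),
      sum_cos_orth n hn (k + l)]
  simp_rw [sq, Finset.sum_mul_sum]
  rw [Finset.sum_comm]
  have main : ∀ k ∈ Finset.Icc (-(Mn : ℤ)) (Mn : ℤ),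
      ∑ j ∈ Finset.range n, ∑ l ∈ Finset.Icc (-(Mn : ℤ)) (Mn : ℤ),
          (d k * Real.cos (k * (2 * π * j / n))) * (d l * Real.cos (l * (2 * π * j / n)))
        = (n : ℝ) * (d k * d k) := by
    intro k hk
    rw [Finset.sum_comm]
    simp only [Finset.mem_Icc] at hk
    have hsum : ∀ l ∈ Finset.Icc (-(Mn : ℤ)) (Mn : ℤ),
        ∑ j ∈ Finset.range n,
            (d k * Real.cos (k * (2 * π * j / n))) * (d l * Real.cos (l * (2 * π * j / n)))
          = (if l = k then d k * d l / 2 * n else 0)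
            + (if l = -k then d k * d l / 2 * n else 0) := by
      intro l hl
      simp only [Finset.mem_Icc] at hl
      rw [key k l]
      have c1 : ((n : ℤ) ∣ (k - l)) = (l = k) := by
        apply propext; constructor
        · intro h
          have hlt : |k - l| < (n : ℤ) := by rw [abs_lt]; omega
          have := Int.eq_zero_of_abs_lt_dvd h hlt
          omega
        · rintro rfl; simp
      have c2 : ((n : ℤ) ∣ (k + l)) = (l = -k) := by
        apply propext; constructor
        · intro h
          have hlt : |k + l| < (n : ℤ) := by rw [abs_lt]; omega
          have := Int.eq_zero_of_abs_lt_dvd h hlt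
          omega
        · rintro rfl; simp
      simp only [c1, c2]
      split_ifs <;> ring
    rw [Finset.sum_congr rfl hsum, Finset.sum_add_distrib,
      Finset.sum_ite_eq' _ k (fun l => d k * d l / 2 * n),
      Finset.sum_ite_eq' _ (-k) (fun l => d k * d l / 2 * n)]
    have hkmem : k ∈ Finset.Icc (-(Mn : ℤ)) (Mn : ℤ) := by simp [Finset.mem_Icc]; omega
    have hkmem' : -k ∈ Finset.Icc (-(Mn : ℤ)) (Mn : ℤ) := by simp [Finset.mem_Icc]; omega
    rw [if_pos hkmem, if_pos hkmem', hd k]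
    ring
  rw [Finset.sum_congr rfl main, ← Finset.mul_sum]

lemma sum_Icc_neg_even (f : ℤ → ℝ) (hf : ∀ k, f (-k) = f k) (m : ℕ) :
    ∑ k ∈ Finset.Icc (-(m : ℤ)) (m : ℤ), f k
      = f 0 + 2 * ∑ k ∈ Finset.Icc 1 m, f (k : ℤ) := by
  induction m with
  | zero => simp
  | succ m ih =>
    have hins : Finset.Icc (-((m + 1 : ℕ) : ℤ)) ((m + 1 : ℕ) : ℤ)
        = insert (-((m + 1 : ℕ) : ℤ)) (insert ((m + 1 : ℕ) : ℤ)
            (Finset.Icc (-(m : ℤ)) (m : ℤ))) := by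
      ext x; simp only [Finset.mem_Icc, Finset.mem_insert]; omega
    rw [hins,
      Finset.sum_insert (by intro h; simp only [Finset.mem_insert, Finset.mem_Icc] at h; omega),
      Finset.sum_insert (by intro h; simp only [Finset.mem_Icc] at h; omega), ih,
      Finset.sum_Icc_succ_top (by omega : 1 ≤ m + 1)]
    have h1 : f (-((m + 1 : ℕ) : ℤ)) = f ((m + 1 : ℕ) : ℤ) := hf _
    push_cast at h1 ⊢
    rw [h1]; ring

lemma L4 (m : ℕ) : ∑ k ∈ Finset.Icc 1 m, (k : ℝ) ^ 4
    = -(m : ℝ) / 30 + (m : ℝ) ^ 3 / 3 + (m : ℝ) ^ 4 / 2 + (m : ℝ) ^ 5 / 5 := by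
  induction m with
  | zero => simp
  | succ m ih => rw [Finset.sum_Icc_succ_top (by omega : 1 ≤ m + 1), ih]; push_cast; ring

lemma L5 (m : ℕ) : ∑ k ∈ Finset.Icc 1 m, (k : ℝ) ^ 5
    = -(m : ℝ) ^ 2 / 12 + 5 * (m : ℝ) ^ 4 / 12 + (m : ℝ) ^ 5 / 2 + (m : ℝ) ^ 6 / 6 := by
  induction m with
  | zero => simp
  | succ m ih => rw [Finset.sum_Icc_succ_top (by omega : 1 ≤ m + 1), ih]; push_cast; ring

lemma L6 (m : ℕ) : ∑ k ∈ Finset.Icc 1 m, (k : ℝ) ^ 6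
    = (m : ℝ) / 42 - (m : ℝ) ^ 3 / 6 + (m : ℝ) ^ 5 / 2 + (m : ℝ) ^ 6 / 2 + (m : ℝ) ^ 7 / 7 := by
  induction m with
  | zero => simp
  | succ m ih => rw [Finset.sum_Icc_succ_top (by omega : 1 ≤ m + 1), ih]; push_cast; ring

noncomputable def pfun (u : ℝ) : ℝ :=
  (1 / 105 + u / 15 + u ^ 2 / 5 + u ^ 3 / 3 + 3 * u ^ 4 / 10 + u ^ 5 / 10 - u ^ 6 / 105)
    / (1 + u) ^ 2

lemma S_eq (m : ℕ) (hm : 1 ≤ m) :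
    (∑ k ∈ Finset.Icc 1 m, (k : ℝ) ^ 4 * (1 - (k : ℝ) / ((m : ℝ) + 1)) ^ 2) / (m : ℝ) ^ 5
      = pfun (1 / (m : ℝ)) := by
  have hm0 : (m : ℝ) ≠ 0 := by positivity
  have hm1 : (m : ℝ) + 1 ≠ 0 := by positivity
  have expand : ∀ k ∈ Finset.Icc 1 m, (k : ℝ) ^ 4 * (1 - (k : ℝ) / ((m : ℝ) + 1)) ^ 2
      = (k : ℝ) ^ 4 - 2 / ((m : ℝ) + 1) * (k : ℝ) ^ 5
          + 1 / ((m : ℝ) + 1) ^ 2 * (k : ℝ) ^ 6 := by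
    intro k _; field_simp; ring
  rw [Finset.sum_congr rfl expand]
  simp_rw [Finset.sum_add_distrib, Finset.sum_sub_distrib, ← Finset.mul_sum]
  rw [L4, L5, L6, pfun]
  have h1u : 1 + 1 / (m : ℝ) ≠ 0 := by positivity
  field_simp
  ring

lemma Slim : Tendsto (fun m : ℕ =>
    (∑ k ∈ Finset.Icc 1 m, (k : ℝ) ^ 4 * (1 - (k : ℝ) / ((m : ℝ) + 1)) ^ 2) / (m : ℝ) ^ 5)
    atTop (𝓝 (1 / 105)) := by
  have hcont : ContinuousAt pfun 0 := by
    apply ContinuousAt.div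
    · fun_prop
    · fun_prop
    · norm_num
  have h0 : pfun 0 = 1 / 105 := by norm_num [pfun]
  have htend : Tendsto (fun m : ℕ => pfun (1 / (m : ℝ))) atTop (𝓝 (pfun 0)) :=
    hcont.tendsto.comp tendsto_one_div_atTop_nhds_zero_nat
  rw [h0] at htend
  apply htend.congr'
  filter_upwards [eventually_ge_atTop 1] with m hm
  exact (S_eq m hm).symm

lemma Glim : Tendsto (fun m : ℕ =>
    (1 / (m : ℝ) ^ 5) * (4 * π *
      ∑ k ∈ Finset.Icc 1 m, (k : ℝ) ^ 4 * (1 - (k : ℝ) / ((m : ℝ) + 1)) ^ 2))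
    atTop (𝓝 ((4 / 105) * π)) := by
  have h2 : (fun m : ℕ =>
      (1 / (m : ℝ) ^ 5) * (4 * π *
        ∑ k ∈ Finset.Icc 1 m, (k : ℝ) ^ 4 * (1 - (k : ℝ) / ((m : ℝ) + 1)) ^ 2))
      = fun m : ℕ => (4 * π) *
        ((∑ k ∈ Finset.Icc 1 m, (k : ℝ) ^ 4 * (1 - (k : ℝ) / ((m : ℝ) + 1)) ^ 2)
          / (m : ℝ) ^ 5) := by
    funext m; ring
  rw [h2, show ((4 / 105) * π : ℝ) = (4 * π) * (1 / 105) by ring]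
  exact Slim.const_mul _

/-- If `M_n²/n → a > 0`, then
`lim_{n→∞} (1/M_n⁵) (2π/n) ∑_{j=0}^{n−1} |F_{M_n}″(2πj/n)|² = (4/105)π`. -/
theorem fejer_deriv2_sq_riemann_sum_limit (a : ℝ) (ha : 0 < a) (M : ℕ → ℕ)
    (hMpos : ∀ n, 0 < M n)
    (hM : Tendsto (fun n : ℕ => ((M n : ℝ)) ^ 2 / (n : ℝ)) atTop (𝓝 a)) :
    Tendsto (fun n : ℕ =>
        (1 / (M n : ℝ) ^ 5) * ((2 * π / n) *
          ∑ j ∈ Finset.range n, |deriv (deriv (fejer (M n))) (2 * π * j / n)| ^ 2))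
      atTop (𝓝 ((4 / 105) * π)) := by
  -- M n → ∞
  have hsq : Tendsto (fun n : ℕ => (M n : ℝ) ^ 2) atTop atTop := by
    have h := Tendsto.pos_mul_atTop ha hM tendsto_natCast_atTop_atTop
    apply h.congr'
    filter_upwards [eventually_ge_atTop 1] with n hn
    have hn0 : (n : ℝ) ≠ 0 := by positivity
    field_simp
  have hMtop : Tendsto M atTop atTop := by
    rw [tendsto_atTop]
    intro b
    filter_upwards [hsq.eventually_ge_atTop ((b : ℝ) ^ 2)] with n hn
    by_contra h
    push_neg at h
    have hb : (M n : ℝ) < b := by exact_mod_cast h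
    have h0 : (0 : ℝ) ≤ (M n : ℝ) := by positivity
    nlinarith
  -- eventually 2 * M n < n
  have hev : ∀ᶠ n in atTop, 0 < n ∧ 2 * M n < n := by
    have h1 : ∀ᶠ n in atTop, ((M n : ℝ)) ^ 2 / n < a + 1 :=
      hM.eventually_lt_const (lt_add_one a)
    filter_upwards [h1, eventually_gt_atTop (⌈4 * (a + 1)⌉₊), eventually_gt_atTop 0]
      with n h1n h2n h3n
    refine ⟨h3n, ?_⟩
    have hnR : (0 : ℝ) < n := by exact_mod_cast h3n
    have hMn2 : ((M n : ℝ)) ^ 2 < (a + 1) * n := by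
      rw [div_lt_iff₀ hnR] at h1n; linarith
    have h4 : 4 * (a + 1) < (n : ℝ) :=
      (Nat.le_ceil _).trans_lt (by exact_mod_cast h2n)
    have hMnn : (0 : ℝ) ≤ (M n : ℝ) := by positivity
    have h5 : (2 * M n : ℝ) < n := by nlinarith
    exact_mod_cast h5
  apply (Glim.comp hMtop).congr'
  filter_upwards [hev] with n hn
  obtain ⟨hn0, h2M⟩ := hn
  simp only [Function.comp]
  set m := M n with hm
  have hnR : (n : ℝ) ≠ 0 := by positivity
  set d : ℤ → ℝ := fun k => (1 - |(k : ℝ)| / ((m : ℝ) + 1)) * (k : ℝ) ^ 2 with hd_def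
  have hd : ∀ k, d (-k) = d k := by
    intro k
    simp only [hd_def]
    push_cast
    rw [abs_neg]
    ring
  have hder : ∀ j : ℕ, |deriv (deriv (fejer m)) (2 * π * j / n)| ^ 2
      = (∑ k ∈ Finset.Icc (-(m : ℤ)) (m : ℤ), d k * Real.cos (k * (2 * π * j / n))) ^ 2 := by
    intro j
    rw [fejer_deriv2, sq_abs]
    rw [show (∑ k ∈ Finset.Icc (-(m : ℤ)) (m : ℤ),
        -((1 - |(k : ℝ)| / ((m : ℝ) + 1)) * (k : ℝ) ^ 2 * Real.cos (k * (2 * π * j / n))))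
      = -(∑ k ∈ Finset.Icc (-(m : ℤ)) (m : ℤ), d k * Real.cos (k * (2 * π * j / n))) by
        rw [← Finset.sum_neg_distrib]]
    rw [neg_sq]
  rw [Finset.sum_congr rfl (fun j _ => hder j), sum_sq_orth n m hn0 h2M d hd,
    sum_Icc_neg_even (fun k => d k ^ 2) (fun k => by simp only [hd k]) m]
  have hd0 : d 0 = 0 := by simp [hd_def]
  have hterm : ∀ k ∈ Finset.Icc 1 m, d ((k : ℕ) : ℤ) ^ 2
      = (k : ℝ) ^ 4 * (1 - (k : ℝ) / ((m : ℝ) + 1)) ^ 2 := by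
    intro k _
    simp only [hd_def, Int.cast_natCast]
    rw [abs_of_nonneg (by positivity : (0 : ℝ) ≤ (k : ℝ))]
    ring
  rw [Finset.sum_congr rfl hterm, hd0]
  have hm0 : (m : ℝ) ≠ 0 := by
    have := hMpos n
    positivity
  set S : ℝ := ∑ k ∈ Finset.Icc 1 m, (k : ℝ) ^ 4 * (1 - (k : ℝ) / ((m : ℝ) + 1)) ^ 2 with hS
  field_simp
  ring
end

section
/- Let F_M be the Fejér kernel of order M and F_M′ its derivative. Then for every positive integer M and every real x with 0 < |x| ≤ π, |F_M′(x)| ≤ π²/x² + π³/((M+1)|x|³). -/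
open Real Filter MeasureTheory Finset
open scoped Topology BigOperators

lemma icc_succ (N : ℕ) :
    Finset.Icc (-((N:ℤ)+1)) ((N:ℤ)+1) =
      insert (-((N:ℤ)+1)) (insert ((N:ℤ)+1) (Finset.Icc (-(N:ℤ)) (N:ℤ))) := by
  ext k; simp [Finset.mem_Icc]; omega

lemma dirichlet (N : ℕ) (x : ℝ) :
    Real.sin (x/2) * ∑ k ∈ Finset.Icc (-(N:ℤ)) (N:ℤ), Real.cos (k*x)
      = Real.sin (((N:ℝ) + 1/2) * x) := by
  induction N with
  | zero => norm_num; ring_nf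
  | succ N ih =>
      have h1 : ((N+1 : ℕ) : ℤ) = (N:ℤ)+1 := by push_cast; ring
      rw [h1, icc_succ, Finset.sum_insert (by simp only [Finset.mem_insert, Finset.mem_Icc]; omega),
        Finset.sum_insert (by simp only [Finset.mem_insert, Finset.mem_Icc]; omega)]
      have e1 : Real.cos ((-((N:ℤ)+1) : ℤ) * x) = Real.cos (((N:ℝ)+1) * x) := by
        push_cast; rw [← Real.cos_neg]; ring_nf
      have e2 : Real.cos ((((N:ℤ)+1) : ℤ) * x) = Real.cos (((N:ℝ)+1) * x) := by
        push_cast; ring_nf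
      rw [e1, e2, mul_add, mul_add, ih]
      have key : Real.sin (x/2) * (2 * Real.cos (((N:ℝ)+1) * x))
          = Real.sin (((N:ℝ)+1+1/2) * x) - Real.sin (((N:ℝ)+1/2) * x) := by
        have h3 : ((N:ℝ)+1+1/2) * x = ((N:ℝ)+1)*x + x/2 := by ring
        have h4 : ((N:ℝ)+1/2) * x = ((N:ℝ)+1)*x - x/2 := by ring
        rw [h3, h4, Real.sin_add, Real.sin_sub]; ring
      push_cast
      linarith [key]

lemma fejer_mul (M : ℕ) (x : ℝ) :
    Real.sin (x/2)^2 * ∑ k ∈ Finset.Icc (-(M:ℤ)) (M:ℤ),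
        (((M:ℝ)+1) - |(k:ℝ)|) * Real.cos (k*x)
      = Real.sin (((M:ℝ)+1) * x / 2)^2 := by
  induction M with
  | zero => norm_num
  | succ M ih =>
      have h1 : ((M+1 : ℕ) : ℤ) = (M:ℤ)+1 := by push_cast; ring
      have split : ∑ k ∈ Finset.Icc (-((M:ℤ)+1)) ((M:ℤ)+1),
            (((M:ℝ)+1+1) - |(k:ℝ)|) * Real.cos (k*x)
          = (∑ k ∈ Finset.Icc (-(M:ℤ)) (M:ℤ), (((M:ℝ)+1) - |(k:ℝ)|) * Real.cos (k*x))
            + ∑ k ∈ Finset.Icc (-((M:ℤ)+1)) ((M:ℤ)+1), Real.cos (k*x) := by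
        rw [icc_succ, Finset.sum_insert (by simp only [Finset.mem_insert, Finset.mem_Icc]; omega),
          Finset.sum_insert (by simp only [Finset.mem_insert, Finset.mem_Icc]; omega),
          Finset.sum_insert (by simp only [Finset.mem_insert, Finset.mem_Icc]; omega),
          Finset.sum_insert (by simp only [Finset.mem_insert, Finset.mem_Icc]; omega)]
        have a1 : |((-((M:ℤ)+1) : ℤ) : ℝ)| = (M:ℝ)+1 := by
          push_cast; rw [abs_neg, abs_of_nonneg (by positivity)]
        have a2 : |((((M:ℤ)+1) : ℤ) : ℝ)| = (M:ℝ)+1 := by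
          push_cast; rw [abs_of_nonneg (by positivity)]
        rw [a1, a2]
        have : ∀ k ∈ Finset.Icc (-(M:ℤ)) (M:ℤ),
            (((M:ℝ)+1+1) - |(k:ℝ)|) * Real.cos (k*x)
              = (((M:ℝ)+1) - |(k:ℝ)|) * Real.cos (k*x) + Real.cos (k*x) := by
          intro k _; ring
        rw [Finset.sum_congr rfl this, Finset.sum_add_distrib]
        ring
      rw [h1]
      push_cast
      rw [split, mul_add, ih]
      have hd := dirichlet (M+1) x
      rw [h1] at hd
      push_cast at hd
      have key : Real.sin (x/2)^2 * ∑ k ∈ Finset.Icc (-((M:ℤ)+1)) ((M:ℤ)+1), Real.cos (k*x)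
          = Real.sin (x/2) * Real.sin (((M:ℝ)+1+1/2) * x) := by
        rw [pow_two, mul_assoc, hd]
      rw [key]
      -- trig identity: sin(a)² + sin(h) sin(2a+h) = sin(a+h)² with a=(M+1)x/2, h=x/2
      have ha : ((M:ℝ)+1+1/2) * x = 2 * (((M:ℝ)+1) * x / 2) + x/2 := by ring
      have hb : ((M:ℝ)+1+1) * x / 2 = ((M:ℝ)+1) * x / 2 + x/2 := by ring
      rw [ha, hb]
      set a := ((M:ℝ)+1) * x / 2
      rw [Real.sin_add, Real.sin_add a (x/2), Real.sin_two_mul, Real.cos_two_mul]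
      nlinarith [Real.sin_sq_add_cos_sq a, Real.sin_sq_add_cos_sq (x/2)]

lemma fejer_eq (M : ℕ) {x : ℝ} (hs : Real.sin (x/2) ≠ 0) :
    fejer M x = Real.sin (((M:ℝ)+1) * x / 2)^2 / (((M:ℝ)+1) * Real.sin (x/2)^2) := by
  have hM1 : ((M:ℝ)+1) ≠ 0 := by positivity
  have hfm := fejer_mul M x
  rw [eq_div_iff (by positivity)]
  rw [← hfm, fejer]
  rw [Finset.sum_mul, Finset.mul_sum]
  congr 1 with k
  field_simp

set_option maxHeartbeats 1000000 in
/-- For every positive integer `M` and every `x` with `0 < |x| ≤ π`,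
`|F_M′(x)| ≤ π²/x² + π³/((M+1)|x|³)`. -/
theorem fejer_deriv_bound (M : ℕ) (hM : 0 < M) (x : ℝ) (hx0 : 0 < |x|) (hx : |x| ≤ π) :
    |deriv (fejer M) x| ≤ π ^ 2 / x ^ 2 + π ^ 3 / (((M : ℝ) + 1) * |x| ^ 3) := by
  have hx' : x ≠ 0 := abs_pos.mp hx0
  have hpi := Real.pi_pos
  -- sin (x/2) ≠ 0 and |sin(x/2)| ≥ |x|/π
  have habs : |x|/2 ≤ π/2 := by linarith
  have hsin_abs : Real.sin (|x|/2) ≥ |x|/π := by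
    have := Real.mul_le_sin (x := |x|/2) (by positivity) habs
    calc |x|/π = 2/π * (|x|/2) := by field_simp
      _ ≤ Real.sin (|x|/2) := this
  have hsin_eq : |Real.sin (x/2)| = Real.sin (|x|/2) := by
    rcases abs_cases x with ⟨h1, h2⟩ | ⟨h1, h2⟩
    · rw [h1, abs_of_nonneg]
      exact Real.sin_nonneg_of_nonneg_of_le_pi (by linarith) (by rw [← h1] at hx; linarith)
    · rw [h1, neg_div, Real.sin_neg, abs_of_nonpos]
      exact Real.sin_nonpos_of_nonpos_of_neg_pi_le (by linarith) (by rw [h1] at hx; linarith)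
  have hsx : Real.sin (x/2) ≠ 0 := by
    intro h
    rw [h, abs_zero] at hsin_eq
    have : |x|/π > 0 := by positivity
    linarith [hsin_eq ▸ hsin_abs]
  set c : ℝ := ((M:ℝ)+1) with hcdef
  have hc : (0:ℝ) < c := by positivity
  -- replace fejer by its closed form near x
  have hev : fejer M =ᶠ[𝓝 x]
      (fun y => Real.sin (c * y / 2)^2 / (c * Real.sin (y/2)^2)) := by
    have hcont : ContinuousAt (fun y : ℝ => Real.sin (y/2)) x :=
      (Real.continuous_sin.comp (continuous_id.div_const 2)).continuousAt
    filter_upwards [hcont.eventually_ne hsx] with y hy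
    exact fejer_eq M hy
  rw [hev.deriv_eq]
  -- compute the derivative
  have h1 : HasDerivAt (fun y : ℝ => Real.sin (c*y/2)) (Real.cos (c*x/2) * (c/2)) x := by
    have hl : HasDerivAt (fun y : ℝ => c*y/2) (c/2) x := by
      simpa using ((hasDerivAt_id x).const_mul c).div_const 2
    exact (Real.hasDerivAt_sin (c*x/2)).comp x hl
  have h2 : HasDerivAt (fun y : ℝ => Real.sin (y/2)) (Real.cos (x/2) * (1/2)) x := by
    have hl : HasDerivAt (fun y : ℝ => y/2) (1/2) x := by
      simpa using (hasDerivAt_id x).div_const 2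
    exact (Real.hasDerivAt_sin (x/2)).comp x hl
  have hnum := h1.pow 2
  have hden := (h2.pow 2).const_mul c
  have hdne : c * Real.sin (x/2)^2 ≠ 0 := by
    exact mul_ne_zero hc.ne' (pow_ne_zero 2 hsx)
  have hg := hnum.div hden hdne
  rw [(show HasDerivAt (fun y : ℝ => Real.sin (c*y/2)^2 / (c*Real.sin (y/2)^2)) _ x from hg).deriv]
  push_cast
  set S := Real.sin (c*x/2)
  set Cc := Real.cos (c*x/2)
  set sh := Real.sin (x/2)
  set ch := Real.cos (x/2)
  set t := |sh| with htdef
  have ht : 0 < t := abs_pos.mpr hsx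
  have hts : sh^2 = t^2 := (sq_abs sh).symm
  have hD : ((2:ℝ) * S ^ (2-1) * (Cc * (c/2)) * (c * sh^2) - S^2 * (c * ((2:ℝ) * sh ^ (2-1) * (ch * (1/2))))) / (c * sh^2)^2
      = S*Cc/sh^2 - S^2*ch/(c*sh^3) := by
    field_simp
    ring
  change |((2:ℝ) * S ^ (2-1) * (Cc * (c/2)) * (c * sh^2) - S^2 * (c * ((2:ℝ) * sh ^ (2-1) * (ch * (1/2))))) / (c * sh^2)^2| ≤ π ^ 2 / x ^ 2 + π ^ 3 / (c * |x| ^ 3)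
  rw [hD]
  have hSle : |S| ≤ 1 := abs_le.mpr ⟨Real.neg_one_le_sin _, Real.sin_le_one _⟩
  have hCle : |Cc| ≤ 1 := abs_le.mpr ⟨Real.neg_one_le_cos _, Real.cos_le_one _⟩
  have hchle : |ch| ≤ 1 := abs_le.mpr ⟨Real.neg_one_le_cos _, Real.cos_le_one _⟩
  have htx : |x| ≤ π * t := by
    have h : |x|/π ≤ t := hsin_eq ▸ hsin_abs
    rw [div_le_iff₀ hpi] at h
    linarith
  have b1 : |S*Cc/sh^2| ≤ 1/t^2 := by
    rw [abs_div, abs_mul, hts, abs_of_nonneg (by positivity : (0:ℝ) ≤ t^2)]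
    apply (div_le_div_iff_of_pos_right (pow_pos ht 2)).mpr
    nlinarith [abs_nonneg S, abs_nonneg Cc]
  have b2 : |S^2*ch/(c*sh^3)| ≤ 1/(c*t^3) := by
    have hden3 : |c*sh^3| = c*t^3 := by rw [abs_mul, abs_of_pos hc, abs_pow]
    rw [abs_div, hden3]
    apply (div_le_div_iff_of_pos_right (mul_pos hc (pow_pos ht 3))).mpr
    have he : |S^2*ch| = |S|^2*|ch| := by rw [abs_mul, abs_pow]
    rw [he]
    nlinarith [abs_nonneg S, abs_nonneg ch, sq_nonneg (|S|)]
  calc |S*Cc/sh^2 - S^2*ch/(c*sh^3)| ≤ |S*Cc/sh^2| + |S^2*ch/(c*sh^3)| := abs_sub _ _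
    _ ≤ 1/t^2 + 1/(c*t^3) := add_le_add b1 b2
    _ ≤ π^2/x^2 + π^3/(c*|x|^3) := by
        have e1 : (1:ℝ)/t^2 ≤ π^2/x^2 := by
          rw [← sq_abs x, div_le_div_iff₀ (pow_pos ht 2) (pow_pos hx0 2)]
          nlinarith [htx, abs_nonneg x, ht]
        have e2 : (1:ℝ)/(c*t^3) ≤ π^3/(c*|x|^3) := by
          rw [div_le_div_iff₀ (mul_pos hc (pow_pos ht 3)) (mul_pos hc (pow_pos hx0 3))]
          have h3 : |x|^3 ≤ (π*t)^3 := pow_le_pow_left₀ (abs_nonneg x) htx 3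
          have h4 : c*|x|^3 ≤ c*((π*t)^3) := mul_le_mul_of_nonneg_left h3 hc.le
          have h5 : c*((π*t)^3) = π^3*(c*t^3) := by ring
          linarith
        linarith
end
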